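/- arXiv:1007.2754 — 3 statements merged into one kernel-verified Lean document; each statement's English description precedes it below -/
import Mathlib

section
/- Every relational empirical model e is realized by some relational hidden-variable model satisfying both Weak Determinism and λ-Independence. -/
/-!
Take as hidden variables the selectors of `e`: functions `g` choosing, at every measurement
`m` that has some possible outcome, one possible outcome `g m`. A selector fixes the outcome
of every measurement, which gives Weak Determinism, and it is defined at every measurement
that is possible at all, which gives λ-Independence. Each possible pair `(m, o)` is reached
by the selector that picks `o` at `m` and anything possible elsewhere.
-/

namespace RelationalModel

variable {α β Λ : Type*}

def WeakDeterminism (h : α → β → Λ → Prop) : Prop :=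
  ∀ a b b' l, h a b l → h a b' l → b = b'

def LambdaIndependence (h : α → β → Λ → Prop) : Prop :=
  ∀ a a' l, (∃ b l', h a' b l') → (∃ b, h a b l) → ∃ b, h a' b l

def Realizes (h : α → β → Λ → Prop) (e : α → β → Prop) : Prop :=
  ∀ a b, e a b ↔ ∃ l, h a b l

variable (e : α → β → Prop)

def Selector : Type _ := {g : α → β // ∀ a, (∃ b, e a b) → e a (g a)}

def selectorModel (a : α) (b : β) (g : Selector e) : Prop := g.1 a = b ∧ e a b

theorem exists_selector_apply_eq {a : α} {b : β} (hab : e a b) :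
    ∃ g : Selector e, g.1 a = b := by
  have : Nonempty β := ⟨b⟩
  classical
  refine ⟨⟨Function.update (fun x => Classical.epsilon (e x)) a b, fun x hx => ?_⟩, by simp⟩
  rcases eq_or_ne x a with rfl | hxa
  · simpa using hab
  · simpa [hxa] using Classical.epsilon_spec hx

theorem weakDeterminism_selectorModel : WeakDeterminism (selectorModel e) :=
  fun _ _ _ _ ⟨hb, _⟩ ⟨hb', _⟩ => hb.symm.trans hb'

theorem lambdaIndependence_selectorModel : LambdaIndependence (selectorModel e) :=
  fun _ a' g ⟨_, _, _, hb⟩ _ => ⟨g.1 a', rfl, g.2 a' ⟨_, hb⟩⟩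

theorem selectorModel_realizes : Realizes (selectorModel e) e :=
  fun _ _ => ⟨fun hab => (exists_selector_apply_eq e hab).imp fun _ hg => ⟨hg, hab⟩,
    fun ⟨_, _, hab⟩ => hab⟩

end RelationalModel

open RelationalModel in
theorem stmt_7_general {n : ℕ} (M O : Fin n → Type)
    (e : (∀ i, M i) → (∀ i, O i) → Prop) :
    ∃ (Λ : Type) (h : (∀ i, M i) → (∀ i, O i) → Λ → Prop),
      -- Weak Determinism
      (∀ (m : ∀ j, M j) (o o' : ∀ j, O j) (l : Λ),
          h m o l → h m o' l → o = o') ∧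
      -- λ-Independence
      (∀ (m m' : ∀ j, M j) (l : Λ),
          (∃ (ob : ∀ j, O j) (l' : Λ), h m' ob l') →
          (∃ ob : ∀ j, O j, h m ob l) →
          ∃ ob : ∀ j, O j, h m' ob l) ∧
      -- h realizes e
      (∀ (m : ∀ j, M j) (o : ∀ j, O j), e m o ↔ ∃ l : Λ, h m o l) :=
  ⟨Selector e, selectorModel e, weakDeterminism_selectorModel e,
    lambdaIndependence_selectorModel e, selectorModel_realizes e⟩

/-- Every relational empirical model is realized by a hidden-variable model
satisfying Weak Determinism and λ-Independence. -/
theorem stmt_7 {n : ℕ} (hn : 1 ≤ n) (M O : Fin n → Type)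
    (e : (∀ i, M i) → (∀ i, O i) → Prop) :
    ∃ (Λ : Type) (h : (∀ i, M i) → (∀ i, O i) → Λ → Prop),
      -- Weak Determinism
      (∀ (m : ∀ j, M j) (o o' : ∀ j, O j) (l : Λ),
          h m o l → h m o' l → o = o') ∧
      -- λ-Independence
      (∀ (m m' : ∀ j, M j) (l : Λ),
          (∃ (ob : ∀ j, O j) (l' : Λ), h m' ob l') →
          (∃ ob : ∀ j, O j, h m ob l) →
          ∃ ob : ∀ j, O j, h m' ob l) ∧
      -- h realizes e
      (∀ (m : ∀ j, M j) (o : ∀ j, O j), e m o ↔ ∃ l : Λ, h m o l) :=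
  stmt_7_general M O e
end

section
/- No GHZ model is realized by any relational hidden-variable model satisfying λ-Independence and Locality. -/
/-!
Under λ-Independence a hidden variable that occurs at all occurs in every possible context,
and Locality lets one glue outcomes observed in different contexts. So such a hidden variable
yields a noncontextual assignment `s i a` of an outcome to each local measurement, which is a
possible joint outcome in every possible context. A GHZ model admits no such `s`: each of the
six values `s i a` occurs in exactly two of the four GHZ contexts, so the four parity
constraints add up to `0 = 1` modulo 2.
-/

namespace HiddenVariableModel

variable {ι Λ : Type*} {α β : ι → Type*}

def LambdaIndependent (h : (∀ i, α i) → (∀ i, β i) → Λ → Prop) : Prop :=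
  ∀ (m m' : ∀ i, α i) (l : Λ), (∃ o l', h m' o l') → (∃ o, h m o l) → ∃ o, h m' o l

def IsLocal (h : (∀ i, α i) → (∀ i, β i) → Λ → Prop) : Prop :=
  ∀ (m : ∀ i, α i) (o : ∀ i, β i) (l : Λ), (∃ o', h m o' l) →
    (∀ i, ∃ m' o', m' i = m i ∧ o' i = o i ∧ h m' o' l) → h m o l

def Realizes (h : (∀ i, α i) → (∀ i, β i) → Λ → Prop)
    (e : (∀ i, α i) → (∀ i, β i) → Prop) : Prop :=
  ∀ m o, e m o ↔ ∃ l, h m o l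

variable {h : (∀ i, α i) → (∀ i, β i) → Λ → Prop}

theorem exists_noncontextual_assignment [∀ i, Nonempty (β i)] (hI : LambdaIndependent h)
    (hL : IsLocal h) {l : Λ} (hl : ∃ m o, h m o l) :
    ∃ s : ∀ i, α i → β i, ∀ m, (∃ o l', h m o l') → h m (fun i ↦ s i (m i)) l := by
  obtain ⟨m₀, hm₀⟩ := hl
  have local_outcome : ∀ i (a : α i), ∃ b : β i, ∀ m, m i = a → (∃ o l', h m o l') →
      ∃ m' o', m' i = a ∧ o' i = b ∧ h m' o' l := by
    intro i a
    by_cases hposs : ∃ m, m i = a ∧ ∃ o l', h m o l'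
    · obtain ⟨m, hma, hm⟩ := hposs
      obtain ⟨o, ho⟩ := hI m₀ m l hm hm₀
      exact ⟨o i, fun _ _ _ ↦ ⟨m, o, hma, rfl, ho⟩⟩
    · exact ⟨Classical.arbitrary _, fun m hma hm ↦ (hposs ⟨m, hma, hm⟩).elim⟩
  choose s hs using local_outcome
  exact ⟨s, fun m hm ↦ hL m _ l (hI m₀ m l hm hm₀) fun i ↦ hs i (m i) m rfl hm⟩

theorem Realizes.exists_noncontextual_section [∀ i, Nonempty (β i)]
    {e : (∀ i, α i) → (∀ i, β i) → Prop} (hre : Realizes h e) (hI : LambdaIndependent h)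
    (hL : IsLocal h) :
    ∃ s : ∀ i, α i → β i, ∀ m, (∃ o, e m o) → e m (fun i ↦ s i (m i)) := by
  by_cases he : ∃ m o, e m o
  · obtain ⟨m₀, o₀, he₀⟩ := he
    obtain ⟨l, hl⟩ := (hre m₀ o₀).1 he₀
    obtain ⟨s, hs⟩ := exists_noncontextual_assignment hI hL ⟨m₀, o₀, hl⟩
    refine ⟨s, fun m ⟨o, hmo⟩ ↦ (hre _ _).2 ⟨l, hs m ?_⟩⟩
    exact ⟨o, (hre m o).1 hmo⟩
  · exact ⟨fun _ _ ↦ Classical.arbitrary _, fun m hm ↦ (he ⟨m, hm⟩).elim⟩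

end HiddenVariableModel

open HiddenVariableModel

theorem ghz_parities_inconsistent (s : Fin 3 → Bool → Bool)
    (hA : xor (s 0 false) (xor (s 1 true) (s 2 true)) = false)
    (hB : xor (s 0 true) (xor (s 1 false) (s 2 true)) = false)
    (hC : xor (s 0 true) (xor (s 1 true) (s 2 false)) = false)
    (hD : xor (s 0 false) (xor (s 1 false) (s 2 false)) = true) : False := by
  revert hA hB hC hD
  cases s 0 false <;> cases s 0 true <;> cases s 1 false <;> cases s 1 true <;>
    cases s 2 false <;> cases s 2 true <;> decide

/-- Measurements 1, 2 are encoded as `false`, `true` and outcomes R, G as `false`, `true`, so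
{RRR, RGG, GRG, GGR} is the set of triples of even G-parity and {RRG, RGR, GRR, GGG} that of
odd G-parity. -/
theorem stmt_10 (e : (Fin 3 → Bool) → (Fin 3 → Bool) → Prop)
    -- e(1,2,2) = e(2,1,2) = e(2,2,1) = {RRR, RGG, GRG, GGR}
    (hP : ∀ m : Fin 3 → Bool,
        (m = ![false, true, true] ∨ m = ![true, false, true] ∨
         m = ![true, true, false]) →
        ∀ o, e m o ↔ xor (o 0) (xor (o 1) (o 2)) = false)
    -- e(1,1,1) = {RRG, RGR, GRR, GGG}
    (h111 : ∀ o, e ![false, false, false] o ↔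
        xor (o 0) (xor (o 1) (o 2)) = true) :
    ¬ ∃ (Λ : Type) (h : (Fin 3 → Bool) → (Fin 3 → Bool) → Λ → Prop),
      -- λ-Independence
      (∀ (m m' : Fin 3 → Bool) (l : Λ),
          (∃ (ob : Fin 3 → Bool) (l' : Λ), h m' ob l') →
          (∃ ob : Fin 3 → Bool, h m ob l) →
          ∃ ob : Fin 3 → Bool, h m' ob l) ∧
      -- Locality
      (∀ (m o : Fin 3 → Bool) (l : Λ),
          (∃ ob : Fin 3 → Bool, h m ob l) →
          (∀ i : Fin 3, ∃ (m' o' : Fin 3 → Bool),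
              m' i = m i ∧ o' i = o i ∧ h m' o' l) →
          h m o l) ∧
      -- h realizes e
      (∀ m o, e m o ↔ ∃ l : Λ, h m o l) := by
  rintro ⟨Λ, h, hI, hL, hre⟩
  obtain ⟨s, hs⟩ := Realizes.exists_noncontextual_section hre hI hL
  have even (m : Fin 3 → Bool) (hm : m = ![false, true, true] ∨ m = ![true, false, true] ∨
      m = ![true, true, false]) : xor (s 0 (m 0)) (xor (s 1 (m 1)) (s 2 (m 2))) = false :=
    (hP m hm _).1 (hs m ⟨_, (hP m hm ![false, false, false]).2 rfl⟩)
  have odd : xor (s 0 false) (xor (s 1 false) (s 2 false)) = true :=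
    (h111 _).1 (hs _ ⟨_, (h111 ![false, false, true]).2 rfl⟩)
  exact ghz_parities_inconsistent s (even _ (.inl rfl)) (even _ (.inr (.inl rfl)))
    (even _ (.inr (.inr rfl))) odd
end

section
/- Let e be any empirical model of the Kochen-Specker type (arity 4, M_i = {m_1,…,m_18}, O_i = {0,1} for i = 1,…,4) such that: (1) there is a function f : P → Q with, for all m̄ ∈ P and all ō ∈ O, e(m̄,ō) ↔ f(m̄) = ō; and (2) e is equivariant, i.e. for every permutation π of {1,2,3,4} and all m̄,ō: e(m̄,ō) ↔ e(π·m̄, π·ō). Then e is not realized by any relational hidden-variable model satisfying λ-Independence and Parameter Independence. -/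
/-!
At a hidden variable supporting one column of the table, λ-Independence makes every context
that occurs in the model supported as well. Given a measurement shared by two columns, swap
coordinates so that it sits in the same position of both contexts; equivariance pins down the
outcomes of the permuted column, and Parameter Independence transfers the shared outcome. Hence
the outcomes come from a single noncontextual assignment of `0/1` to the 18 measurements with
exactly one `1` per column. This is impossible by parity: every measurement lies in exactly two
of the nine columns.
-/

open Function

def IsOneHot {ι : Type*} (o : ι → Bool) : Prop :=
  ∃ j, ∀ i, o i = true ↔ i = j

theorem IsOneHot.sum_toNat {ι : Type*} [Fintype ι] {o : ι → Bool} (ho : IsOneHot o) :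
    ∑ i, (o i).toNat = 1 := by
  obtain ⟨j, hj⟩ := ho
  rw [Finset.sum_eq_single j (fun i _ hi => by simp [(hj i).not.2 hi]) (by simp), (hj j).2 rfl]
  rfl

section HiddenVariables

variable {ι M O Λ : Type*}

def LambdaIndependent (h : (ι → M) → (ι → O) → Λ → Prop) : Prop :=
  ∀ (m m' : ι → M) (l : Λ), (∃ ob l', h m' ob l') → (∃ ob, h m ob l) → ∃ ob, h m' ob l

def ParameterIndependent (h : (ι → M) → (ι → O) → Λ → Prop) : Prop :=
  ∀ (i : ι) (m m' : ι → M), m i = m' i → ∀ (o : O) (l : Λ),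
    (∃ ob, ob i = o ∧ h m ob l) → (∃ ob, h m' ob l) → ∃ ob, ob i = o ∧ h m' ob l

def Realizes (h : (ι → M) → (ι → O) → Λ → Prop) (e : (ι → M) → (ι → O) → Prop) : Prop :=
  ∀ m o, e m o ↔ ∃ l, h m o l

def Equivariant (e : (ι → M) → (ι → O) → Prop) : Prop :=
  ∀ (π : Equiv.Perm ι) (m : ι → M) (o : ι → O), e m o ↔ e (m ∘ π.symm) (o ∘ π.symm)

variable {h : (ι → M) → (ι → O) → Λ → Prop} {e : (ι → M) → (ι → O) → Prop}
  {P : Set (ι → M)} {f : (ι → M) → (ι → O)}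

theorem Equivariant.comp_perm_iff (he : Equivariant e) (hfe : ∀ m ∈ P, ∀ o, e m o ↔ f m = o)
    {c : ι → M} (hc : c ∈ P) (π : Equiv.Perm ι) (o : ι → O) :
    e (c ∘ π) o ↔ o = f c ∘ π := by
  rw [he π, comp_assoc, π.self_comp_symm, comp_id, hfe c hc, Equiv.eq_comp_symm, eq_comm]

theorem Realizes.exists_forall_mem (hLI : LambdaIndependent h) (hreal : Realizes h e)
    (hfe : ∀ m ∈ P, ∀ o, e m o ↔ f m = o) (hP : P.Nonempty) :
    ∃ l, ∀ c ∈ P, h c (f c) l := by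
  obtain ⟨c₀, hc₀⟩ := hP
  obtain ⟨l, hl⟩ := (hreal c₀ (f c₀)).1 ((hfe c₀ hc₀ _).2 rfl)
  refine ⟨l, fun c hc => ?_⟩
  obtain ⟨ob, hob⟩ := hLI c₀ c l ⟨f c, (hreal c (f c)).1 ((hfe c hc _).2 rfl)⟩ ⟨_, hl⟩
  obtain rfl : f c = ob := (hfe c hc ob).1 ((hreal c ob).2 ⟨l, hob⟩)
  exact hob

theorem Realizes.apply_eq_apply_of_eq (hLI : LambdaIndependent h)
    (hPI : ParameterIndependent h) (hreal : Realizes h e) (he : Equivariant e)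
    (hfe : ∀ m ∈ P, ∀ o, e m o ↔ f m = o) {l : Λ} (hl : ∀ c ∈ P, h c (f c) l)
    [DecidableEq ι] {c c' : ι → M} (hc : c ∈ P) (hc' : c' ∈ P) {i i' : ι}
    (hcc' : c i = c' i') : f c i = f c' i' := by
  set π := Equiv.swap i i'
  have hperm : e (c' ∘ π) (f c' ∘ π) := (he.comp_perm_iff hfe hc' π _).2 rfl
  obtain ⟨ob₀, hob₀⟩ := hLI c (c' ∘ π) l ⟨_, (hreal _ _).1 hperm⟩ ⟨_, hl c hc⟩
  obtain ⟨ob, hobi, hob⟩ :=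
    hPI i c (c' ∘ π) (by simp [π, hcc']) (f c i) l ⟨f c, rfl, hl c hc⟩ ⟨ob₀, hob₀⟩
  obtain rfl : ob = f c' ∘ π := (he.comp_perm_iff hfe hc' π ob).1 ((hreal _ _).2 ⟨l, hob⟩)
  simpa [π] using hobi.symm

theorem exists_comp_eq_of_apply_eq_apply [Nonempty O]
    (hf : ∀ c ∈ P, ∀ c' ∈ P, ∀ i i', c i = c' i' → f c i = f c' i') :
    ∃ v : M → O, ∀ c ∈ P, f c = v ∘ c := by
  classical
  refine ⟨fun k => if hk : ∃ c ∈ P, ∃ i, c i = k then f hk.choose hk.choose_spec.2.choose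
    else Classical.arbitrary O, fun c hc => funext fun i => ?_⟩
  have hk : ∃ c' ∈ P, ∃ i', c' i' = c i := ⟨c, hc, i, rfl⟩
  rw [comp_apply, dif_pos hk]
  exact hf _ hc _ hk.choose_spec.1 _ _ hk.choose_spec.2.choose_spec.symm

end HiddenVariables

def cabelloColumns : Set (Fin 4 → Fin 18) :=
  {![0, 1, 2, 3], ![0, 4, 5, 6], ![7, 8, 2, 9], ![7, 10, 6, 11], ![1, 4, 12, 13],
    ![8, 10, 13, 14], ![15, 16, 3, 9], ![15, 17, 5, 11], ![16, 17, 12, 14]}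

theorem not_forall_isOneHot_cabelloColumns (v : Fin 18 → Bool) :
    ¬ ∀ c ∈ cabelloColumns, IsOneHot (v ∘ c) := by
  intro hv
  have hsum : ∀ c ∈ cabelloColumns, ∑ i, (v (c i)).toNat = 1 := fun c hc => (hv c hc).sum_toNat
  simp only [cabelloColumns, Set.forall_mem_insert, Set.mem_singleton_iff, forall_eq,
    Fin.sum_univ_four, Fin.isValue, Matrix.cons_val_zero, Matrix.cons_val_one, Matrix.cons_val]
    at hsum
  omega

/-- Kochen-Specker: no empirical model of the Kochen-Specker type (arity 4,
18 measurements m₁,…,m₁₈ encoded as Fin 18, outcomes {0,1} encoded as Bool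
with 1 = true) which is functional on the columns P of the Cabello table,
with values in the one-hot outcome set Q, and equivariant, is realized by any
hidden-variable model satisfying λ-Independence and Parameter Independence. -/
theorem stmt_12 (e : (Fin 4 → Fin 18) → (Fin 4 → Bool) → Prop)
    (P : Set (Fin 4 → Fin 18))
    -- the nine columns of the Cabello table (mₖ encoded as k-1 : Fin 18)
    (hPdef : P = {![0, 1, 2, 3], ![0, 4, 5, 6], ![7, 8, 2, 9],
                  ![7, 10, 6, 11], ![1, 4, 12, 13], ![8, 10, 13, 14],
                  ![15, 16, 3, 9], ![15, 17, 5, 11], ![16, 17, 12, 14]})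
    (Q : Set (Fin 4 → Bool))
    -- Q = {(1,0,0,0),(0,1,0,0),(0,0,1,0),(0,0,0,1)}
    (hQdef : Q = {o | ∃ j : Fin 4, ∀ i : Fin 4, o i = true ↔ i = j})
    -- (1) on P, e is given by a function f : P → Q
    (hfun : ∃ f : (Fin 4 → Fin 18) → (Fin 4 → Bool),
        (∀ m ∈ P, f m ∈ Q) ∧ (∀ m ∈ P, ∀ o, e m o ↔ f m = o))
    -- (2) e is equivariant
    (hequi : ∀ (π : Equiv.Perm (Fin 4)) (m : Fin 4 → Fin 18) (o : Fin 4 → Bool),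
        e m o ↔ e (fun j => m (π.symm j)) (fun j => o (π.symm j))) :
    ¬ ∃ (Λ : Type) (h : (Fin 4 → Fin 18) → (Fin 4 → Bool) → Λ → Prop),
      -- λ-Independence
      (∀ (m m' : Fin 4 → Fin 18) (l : Λ),
          (∃ (ob : Fin 4 → Bool) (l' : Λ), h m' ob l') →
          (∃ ob : Fin 4 → Bool, h m ob l) →
          ∃ ob : Fin 4 → Bool, h m' ob l) ∧
      -- Parameter Independence
      (∀ (i : Fin 4) (m m' : Fin 4 → Fin 18), m i = m' i → ∀ (o : Bool) (l : Λ),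
          (∃ ob : Fin 4 → Bool, ob i = o ∧ h m ob l) →
          (∃ ob : Fin 4 → Bool, h m' ob l) →
          ∃ ob : Fin 4 → Bool, ob i = o ∧ h m' ob l) ∧
      -- h realizes e
      (∀ m o, e m o ↔ ∃ l : Λ, h m o l) := by
  rintro ⟨Λ, h, hLI, hPI, hreal⟩
  obtain ⟨f, hfQ, hfe⟩ := hfun
  subst hPdef hQdef
  obtain ⟨l, hl⟩ := Realizes.exists_forall_mem hLI hreal hfe ⟨_, Set.mem_insert _ _⟩
  obtain ⟨v, hv⟩ := exists_comp_eq_of_apply_eq_apply fun c hc c' hc' _ _ =>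
    Realizes.apply_eq_apply_of_eq hLI hPI hreal hequi hfe hl hc hc'
  exact not_forall_isOneHot_cabelloColumns v fun c hc => hv c hc ▸ hfQ c hc
end
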